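/- Fix λ, μ ∈ ℝ and k ∈ ℤ, let M'(λ,μ) := S · diag(1, e^{−λ}, e^{−μ}, e^{−μ}) · S⁻¹ (a K2 Markov matrix with eigenvalues 1, e^{−λ}, and e^{−μ} with multiplicity two), and let Q'_k be the 4×4 real matrix (1/4)·[[−λ−2μ, −λ+2μ, λ−4πk, λ+4πk], [−λ+2μ, −λ−2μ, λ+4πk, λ−4πk], [λ+4πk, λ−4πk, −λ−2μ, −λ+2μ], [λ−4πk, λ+4πk, −λ+2μ, −λ−2μ]]. Then exp(Q'_k) = M'(λ,μ), and Q'_k is a rate matrix if and only if 4π·|k| ≤ λ and λ ≤ 2μ. In particular, if 4π ≤ λ ≤ 2μ then Q'_0, Q'_1 and Q'_{−1} are three pairwise distinct rate matrices with the same exponential M'(λ,μ). -/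

import Mathlib

open Real

/-- A rate matrix: nonnegative off-diagonal entries, rows sum to 0. -/
def IsRate {k : ℕ} (Q : Matrix (Fin k) (Fin k) ℝ) : Prop :=
  (∀ i j, i ≠ j → 0 ≤ Q i j) ∧ ∀ i, ∑ j, Q i j = 0

/-- The 4×4 Hadamard matrix `S` (over ℝ). -/
def S : Matrix (Fin 4) (Fin 4) ℝ :=
  !![1,  1,  1,  1;
     1,  1, -1, -1;
     1, -1,  1, -1;
     1, -1, -1,  1]

/-- The K2 Markov matrix `M'(λ,μ)` with eigenvalues `1, e^{-λ}, e^{-μ}, e^{-μ}`. -/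
noncomputable def M' (l m : ℝ) : Matrix (Fin 4) (Fin 4) ℝ :=
  S * Matrix.diagonal ![1, exp (-l), exp (-m), exp (-m)] * S⁻¹

/-- The family of real logarithms `Q'_k` of `M'(λ,μ)`. -/
noncomputable def Q' (l m : ℝ) (k : ℤ) : Matrix (Fin 4) (Fin 4) ℝ :=
  (1 / 4 : ℝ) •
    !![-l - 2 * m, -l + 2 * m, l - 4 * π * k, l + 4 * π * k;
       -l + 2 * m, -l - 2 * m, l + 4 * π * k, l - 4 * π * k;
       l + 4 * π * k, l - 4 * π * k, -l - 2 * m, -l + 2 * m;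
       l - 4 * π * k, l + 4 * π * k, -l + 2 * m, -l - 2 * m]

/-!
Conjugation by the Hadamard matrix `S` turns `Q'_k` into the block-diagonal matrix
`diag(0, -λ) ⊕ !![-μ, 2πk; -2πk, -μ]`, whose last block is the real form of `-μ + 2πk i`.
Block-diagonal matrices of this shape form a continuous copy of the ring `ℝ × ℝ × ℂ`, in which
`exp` acts componentwise, and `e^{-μ + 2πk i} = e^{-μ}` does not depend on `k`; hence
`exp Q'_k = M'(λ, μ)` for every `k`. The rate-matrix conditions are read off the entries: the
off-diagonal ones are `(2μ - λ)/4` and `(λ ± 4πk)/4`, and all rows sum to `0`.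
-/

lemma S_mul_S : S * S = (4 : ℝ) • 1 := by
  ext i j
  fin_cases i <;> fin_cases j <;>
    simp [S, Matrix.mul_apply, Fin.sum_univ_four] <;> norm_num

lemma S_mul_smul_S : S * ((4 : ℝ)⁻¹ • S) = 1 := by
  rw [Matrix.mul_smul, S_mul_S, smul_smul, inv_mul_cancel₀ four_ne_zero, one_smul]

lemma S_inv : S⁻¹ = (4 : ℝ)⁻¹ • S :=
  Matrix.inv_eq_right_inv S_mul_smul_S

lemma isUnit_S : IsUnit S :=
  (Matrix.isUnit_iff_isUnit_det S).mpr (Matrix.isUnit_det_of_right_inverse S_mul_smul_S)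

noncomputable def blockDiagHom : ℝ × ℝ × ℂ →+* Matrix (Fin 4) (Fin 4) ℝ where
  toFun x := !![x.1, 0, 0, 0;
                0, x.2.1, 0, 0;
                0, 0, x.2.2.re, x.2.2.im;
                0, 0, -x.2.2.im, x.2.2.re]
  map_one' := by
    ext i j
    fin_cases i <;> fin_cases j <;> simp
  map_mul' x y := by
    ext i j
    fin_cases i <;> fin_cases j <;>
      simp [Matrix.mul_apply, Fin.sum_univ_four, Complex.mul_re, Complex.mul_im] <;> ring
  map_zero' := by
    ext i j
    fin_cases i <;> fin_cases j <;> simp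
  map_add' x y := by
    ext i j
    fin_cases i <;> fin_cases j <;> simp [add_comm]

lemma continuous_blockDiagHom : Continuous blockDiagHom := by
  refine continuous_matrix fun i j => ?_
  fin_cases i <;> fin_cases j <;> simp [blockDiagHom] <;> fun_prop

lemma exp_prod_real_real_complex (x : ℝ × ℝ × ℂ) :
    NormedSpace.exp x = (Real.exp x.1, Real.exp x.2.1, Complex.exp x.2.2) := by
  ext <;> simp [Real.exp_eq_exp_ℝ, Complex.exp_eq_exp_ℂ]

lemma exp_blockDiagHom (x : ℝ × ℝ × ℂ) :
    NormedSpace.exp (blockDiagHom x) =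
      blockDiagHom (Real.exp x.1, Real.exp x.2.1, Complex.exp x.2.2) := by
  -- `map_exp` wants a normed ring; the operator norm induces the product topology definitionally.
  open scoped Matrix.Norms.Operator in
  rw [← exp_prod_real_real_complex, NormedSpace.map_exp _ continuous_blockDiagHom]
  rfl

lemma Complex.exp_mk_two_pi_int_mul (x : ℝ) (k : ℤ) :
    Complex.exp ⟨x, 2 * π * k⟩ = Real.exp x := by
  have : (⟨x, 2 * π * k⟩ : ℂ) = x + k * (2 * π * Complex.I) := by
    apply Complex.ext <;> simp [mul_comm]
  rw [this, Complex.exp_add, Complex.exp_int_mul_two_pi_mul_I, mul_one, Complex.ofReal_exp]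

lemma Q'_mul_S (l m : ℝ) (k : ℤ) :
    Q' l m k * S = S * blockDiagHom (0, -l, ⟨-m, 2 * π * k⟩) := by
  ext i j
  fin_cases i <;> fin_cases j <;>
    simp [Q', S, blockDiagHom, Matrix.mul_apply, Fin.sum_univ_four] <;> ring

lemma Q'_eq_conj (l m : ℝ) (k : ℤ) :
    Q' l m k = S * blockDiagHom (0, -l, ⟨-m, 2 * π * k⟩) * S⁻¹ := by
  rw [← Q'_mul_S, Matrix.mul_assoc, S_inv, S_mul_smul_S, Matrix.mul_one]

lemma exp_Q' (l m : ℝ) (k : ℤ) : NormedSpace.exp (Q' l m k) = M' l m := by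
  rw [Q'_eq_conj, Matrix.exp_conj _ _ isUnit_S, exp_blockDiagHom, Complex.exp_mk_two_pi_int_mul,
    M']
  congr 2
  ext i j
  fin_cases i <;> fin_cases j <;>
    simp [blockDiagHom, Matrix.diagonal, -Complex.ofReal_exp]

lemma isRate_Q'_iff (l m : ℝ) (k : ℤ) :
    IsRate (Q' l m k) ↔ 4 * π * |(k : ℝ)| ≤ l ∧ l ≤ 2 * m := by
  have habs : |4 * π * (k : ℝ)| = 4 * π * |(k : ℝ)| := by
    rw [abs_mul, abs_of_nonneg (by positivity : (0:ℝ) ≤ 4 * π)]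
  rw [← habs, abs_le]
  constructor
  · rintro ⟨hoff, -⟩
    have h1 := hoff 0 1 (by decide)
    have h2 := hoff 0 2 (by decide)
    have h3 := hoff 0 3 (by decide)
    simp [Q'] at h1 h2 h3
    exact ⟨⟨by linarith, by linarith⟩, by linarith⟩
  · rintro ⟨⟨hk₁, hk₂⟩, hlm⟩
    refine ⟨fun i j hij => ?_, fun i => ?_⟩
    · fin_cases i <;> fin_cases j <;> simp_all [Q'] <;> linarith
    · fin_cases i <;> simp [Q', Fin.sum_univ_four] <;> ring

lemma Q'_injective (l m : ℝ) : Function.Injective (Q' l m) := by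
  intro k₁ k₂ h
  have h03 := congrFun (congrFun h 0) 3
  simpa [Q', Real.pi_ne_zero] using h03

/-- `exp (Q'_k) = M'(λ,μ)`; `Q'_k` is a rate matrix iff `4π·|k| ≤ λ` and `λ ≤ 2μ`; and if
`4π ≤ λ ≤ 2μ`, then `Q'_0, Q'_1, Q'_{-1}` are three pairwise distinct rate matrices with
the same exponential `M'(λ,μ)`. -/
theorem stmt_14 (l m : ℝ) (k : ℤ) :
    NormedSpace.exp (Q' l m k) = M' l m ∧
    (IsRate (Q' l m k) ↔ 4 * π * |(k : ℝ)| ≤ l ∧ l ≤ 2 * m) ∧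
    (4 * π ≤ l → l ≤ 2 * m →
      Q' l m 0 ≠ Q' l m 1 ∧ Q' l m 0 ≠ Q' l m (-1) ∧ Q' l m 1 ≠ Q' l m (-1) ∧
      IsRate (Q' l m 0) ∧ IsRate (Q' l m 1) ∧ IsRate (Q' l m (-1)) ∧
      NormedSpace.exp (Q' l m 0) = M' l m ∧
      NormedSpace.exp (Q' l m 1) = M' l m ∧
      NormedSpace.exp (Q' l m (-1)) = M' l m) := by
  refine ⟨exp_Q' l m k, isRate_Q'_iff l m k, fun hl hlm => ?_⟩
  have hrate : ∀ k : ℤ, |(k : ℝ)| ≤ 1 → IsRate (Q' l m k) := fun k hk =>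
    (isRate_Q'_iff l m k).mpr ⟨by nlinarith [Real.pi_pos, abs_nonneg (k : ℝ)], hlm⟩
  refine ⟨(Q'_injective l m).ne (by decide), (Q'_injective l m).ne (by decide),
    (Q'_injective l m).ne (by decide), hrate 0 (by simp), hrate 1 (by simp), hrate (-1) (by simp),
    exp_Q' l m 0, exp_Q' l m 1, exp_Q' l m (-1)⟩
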